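/- arXiv:2004.03998 — 11 statements merged into one kernel-verified Lean document; each statement's English description precedes it below -/
import Mathlib

section
/- Let n ≥ 2 be an integer with prime factorization n = p₁^{e₁} ⋯ p_v^{e_v}, and let k = min{ p_i^{e_i} + 1 : 1 ≤ i ≤ v }. Then there exists an orthogonal array OA(n, k), i.e., a function A : Fin (n²) → Fin k → Fin n such that for any two distinct columns j₁ ≠ j₂, the map i ↦ (A i j₁, A i j₂) from Fin (n²) to Fin n × Fin n is bijective. -/
/-!
Over a finite field `F` with `q` elements, the rows `(x, y) ∈ F²` and the columns
`F ∪ {∞}` give an OA(q, q + 1): column `c` reads `x + c y` and column `∞` reads `y`, and any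
two of these linear forms are linearly independent. Orthogonal arrays with the same number of
columns multiply (MacNeish): rows, and symbols, are taken componentwise. Truncating each
OA(pᵢ^eᵢ, pᵢ^eᵢ + 1) to `k` columns and multiplying gives an OA(n, k).
-/

open Function

/-- An orthogonal array OA(n, k): a function `A : Fin (n²) → Fin k → Fin n` such that
for any two distinct columns the induced pair map is bijective. -/
def IsOA (n k : ℕ) (A : Fin (n ^ 2) → Fin k → Fin n) : Prop :=
  ∀ j₁ j₂ : Fin k, j₁ ≠ j₂ → Function.Bijective (fun i => (A i j₁, A i j₂))

def IsOrthogonalArray {R C S : Type*} (A : R → C → S) : Prop :=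
  ∀ j₁ j₂ : C, j₁ ≠ j₂ → Bijective fun i => (A i j₁, A i j₂)

namespace IsOrthogonalArray

variable {R R' C C' S S' : Type*} {A : R → C → S}

theorem reindex (hA : IsOrthogonalArray A) (e : R' ≃ R) (f : C' ↪ C) (g : S ≃ S') :
    IsOrthogonalArray fun i j => g (A (e i) (f j)) := fun _ _ hj =>
  ((Equiv.prodCongr g g).bijective.comp (hA _ _ (f.injective.ne hj))).comp e.bijective

theorem prod {B : R' → C → S'} (hA : IsOrthogonalArray A) (hB : IsOrthogonalArray B) :
    IsOrthogonalArray fun (i : R × R') j => (A i.1 j, B i.2 j) := fun j₁ j₂ hj =>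
  (Equiv.prodProdProdComm S S S' S').bijective.comp ((hA j₁ j₂ hj).prodMap (hB j₁ j₂ hj))

end IsOrthogonalArray

def affinePlaneArray (F : Type*) [Field F] (p : F × F) : Option F → F
  | none => p.2
  | some c => p.1 + c * p.2

theorem isOrthogonalArray_affinePlaneArray (F : Type*) [Field F] [Finite F] :
    IsOrthogonalArray (affinePlaneArray F) := by
  intro o₁ o₂ ho
  rw [← Finite.injective_iff_bijective]
  rintro ⟨x, y⟩ ⟨x', y'⟩ h
  obtain ⟨h₁, h₂⟩ := Prod.mk.inj h
  rw [Prod.mk.injEq]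
  cases o₁ <;> cases o₂ <;> simp only [affinePlaneArray] at h₁ h₂ <;> grind

def OAExists (n k : ℕ) : Prop := ∃ A : Fin (n ^ 2) → Fin k → Fin n, IsOA n k A

theorem IsOrthogonalArray.oaExists {R C S : Type*} [Fintype R] [Fintype C] [Fintype S]
    {A : R → C → S} (hA : IsOrthogonalArray A) {n k : ℕ} (hR : Fintype.card R = n ^ 2)
    (hS : Fintype.card S = n) (hk : k ≤ Fintype.card C) : OAExists n k :=
  ⟨_, (hA.reindex (Fintype.equivFinOfCardEq hR).symm
    ((Fin.castLEEmb hk).trans (Fintype.equivFin C).symm.toEmbedding)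
    (Fintype.equivFinOfCardEq hS) : IsOA n k _)⟩

namespace OAExists

theorem mono {n k k' : ℕ} (h : OAExists n k) (hk : k' ≤ k) : OAExists n k' :=
  let ⟨A, hA⟩ := h
  IsOrthogonalArray.oaExists (A := A) hA (by simp) (by simp) (by simpa using hk)

theorem mul {n m k : ℕ} (hn : OAExists n k) (hm : OAExists m k) : OAExists (n * m) k :=
  let ⟨A, hA⟩ := hn
  let ⟨B, hB⟩ := hm
  IsOrthogonalArray.oaExists (IsOrthogonalArray.prod (A := A) (B := B) hA hB)
    (by simp [mul_pow]) (by simp) (by simp)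

theorem one (k : ℕ) : OAExists 1 k :=
  IsOrthogonalArray.oaExists (A := fun (_ : Unit) (_ : Fin k) => ())
    (fun _ _ _ => ⟨fun _ _ _ => rfl, fun _ => ⟨(), rfl⟩⟩) rfl rfl (by simp)

theorem card_field (F : Type*) [Field F] [Fintype F] :
    OAExists (Fintype.card F) (Fintype.card F + 1) :=
  (isOrthogonalArray_affinePlaneArray F).oaExists (by simp [sq]) rfl (by simp)

theorem prime_pow {p e : ℕ} (hp : p.Prime) (he : e ≠ 0) : OAExists (p ^ e) (p ^ e + 1) := by
  have : Fact p.Prime := ⟨hp⟩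
  have : Fintype (GaloisField p e) := Fintype.ofFinite _
  have hcard : Fintype.card (GaloisField p e) = p ^ e := by
    rw [← Nat.card_eq_fintype_card, GaloisField.card p e he]
  simpa only [hcard] using card_field (GaloisField p e)

end OAExists

/-- Theorem 1: if `n ≥ 2` has prime factorization `n = p₁^{e₁} ⋯ p_v^{e_v}` and
`k = min { p_i^{e_i} + 1 }`, then there exists an orthogonal array OA(n, k). -/
theorem oa_exists_of_factorization (n : ℕ) (hn : 2 ≤ n) (k : ℕ)
    (hk : k = n.primeFactors.inf'
      (Nat.nonempty_primeFactors.mpr (by omega))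
      (fun p => p ^ n.factorization p + 1)) :
    ∃ A : Fin (n ^ 2) → Fin k → Fin n, IsOA n k A := by
  have hn0 : n ≠ 0 := by omega
  suffices OAExists (∏ p ∈ n.primeFactors, p ^ n.factorization p) k by
    rwa [← Nat.prod_factorization_eq_prod_primeFactors,
      Nat.prod_factorization_pow_eq_self hn0] at this
  refine Finset.prod_induction _ (OAExists · k) (fun _ _ => OAExists.mul) (OAExists.one k)
    fun p hp => ?_
  refine (OAExists.prime_pow (Nat.prime_of_mem_primeFactors hp) ?_).mono ?_
  · exact Finsupp.mem_support_iff.mp (n.support_factorization ▸ hp)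
  · exact hk ▸ Finset.inf'_le _ hp
end

section
/- For every prime power q there exists an orthogonal array OA(q, q+1), i.e., a function A : Fin (q²) → Fin (q+1) → Fin q such that for any two distinct columns the induced pair map is bijective, which additionally satisfies: for every row i with i < q and any two columns j, j' among the first q columns, A i j = A i j' (the first q rows of A are constant across its first q columns). -/
theorem oa_aux (F : Type) [Field F] [Fintype F] (q : ℕ) (hcard : Fintype.card F = q) :
    ∃ A : Fin (q ^ 2) → Fin (q + 1) → Fin q,
      IsOA q (q + 1) A ∧
      ∀ i : Fin (q ^ 2), (i : ℕ) < q →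
        ∀ j j' : Fin (q + 1), (j : ℕ) < q → (j' : ℕ) < q → A i j = A i j' := by
  have hq0 : 0 < q := hcard ▸ Fintype.card_pos
  let e : F ≃ Fin q := Fintype.equivFinOfCardEq hcard
  have hdiv : ∀ i : Fin (q ^ 2), (i : ℕ) / q < q := by
    intro i
    exact Nat.div_lt_of_lt_mul (by simpa [pow_two] using i.isLt)
  let a : Fin (q ^ 2) → F := fun i => e.symm ⟨(i : ℕ) / q, hdiv i⟩
  let b : Fin (q ^ 2) → F := fun i => e.symm ⟨(i : ℕ) % q, Nat.mod_lt _ hq0⟩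
  let a₀ : F := e.symm ⟨0, hq0⟩
  let c : Fin (q ^ 2) → F := fun i => a i - a₀
  let A : Fin (q ^ 2) → Fin (q + 1) → Fin q := fun i j =>
    if h : (j : ℕ) < q then e (c i * e.symm ⟨(j : ℕ), h⟩ + b i) else e (a i)
  have key : ∀ i₁ i₂ : Fin (q ^ 2), a i₁ = a i₂ → b i₁ = b i₂ → i₁ = i₂ := by
    intro i₁ i₂ ha hb
    have h1 : (i₁ : ℕ) / q = (i₂ : ℕ) / q := congrArg Fin.val (e.symm.injective ha)
    have h2 : (i₁ : ℕ) % q = (i₂ : ℕ) % q := congrArg Fin.val (e.symm.injective hb)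
    have d1 := Nat.div_add_mod (i₁ : ℕ) q
    have d2 := Nat.div_add_mod (i₂ : ℕ) q
    apply Fin.ext
    rw [← d1, ← d2, h1, h2]
  refine ⟨A, ?_, ?_⟩
  · intro j₁ j₂ hj
    rw [Fintype.bijective_iff_injective_and_card]
    constructor
    · intro i₁ i₂ h
      simp only [Prod.mk.injEq] at h
      obtain ⟨h1, h2⟩ := h
      by_cases hj1 : (j₁ : ℕ) < q <;> by_cases hj2 : (j₂ : ℕ) < q
      · -- both finite
        simp only [A, dif_pos hj1, dif_pos hj2] at h1 h2
        have e1 := e.injective h1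
        have e2 := e.injective h2
        set x₁ : F := e.symm ⟨(j₁ : ℕ), hj1⟩
        set x₂ : F := e.symm ⟨(j₂ : ℕ), hj2⟩
        have hx : x₁ ≠ x₂ := by
          intro hxx
          apply hj
          have := e.symm.injective hxx
          have := congrArg Fin.val this
          simp at this
          exact Fin.ext this
        have hc : c i₁ = c i₂ := by
          have hsub : c i₁ * (x₁ - x₂) = c i₂ * (x₁ - x₂) := by ring_nf; linear_combination e1 - e2
          exact mul_right_cancel₀ (sub_ne_zero.mpr hx) hsub
        have ha : a i₁ = a i₂ := by
          have h : a i₁ - a₀ = a i₂ - a₀ := hc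
          exact sub_left_inj.mp h
        have hb : b i₁ = b i₂ := by linear_combination e1 - hc * x₁
        exact key _ _ ha hb
      · simp only [A, dif_pos hj1, dif_neg hj2] at h1 h2
        have ha : a i₁ = a i₂ := e.injective h2
        have hc : c i₁ = c i₂ := by simp only [c, ha]
        have e1 := e.injective h1
        have hb : b i₁ = b i₂ := by
          linear_combination e1 - hc * (e.symm ⟨(j₁ : ℕ), hj1⟩ : F)
        exact key _ _ ha hb
      · simp only [A, dif_neg hj1, dif_pos hj2] at h1 h2
        have ha : a i₁ = a i₂ := e.injective h1
        have hc : c i₁ = c i₂ := by simp only [c, ha]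
        have e2 := e.injective h2
        have hb : b i₁ = b i₂ := by
          linear_combination e2 - hc * (e.symm ⟨(j₂ : ℕ), hj2⟩ : F)
        exact key _ _ ha hb
      · exfalso
        apply hj
        have h1 : (j₁ : ℕ) = q := by have := j₁.isLt; omega
        have h2 : (j₂ : ℕ) = q := by have := j₂.isLt; omega
        exact Fin.ext (h1.trans h2.symm)
    · simp [pow_two]
  · intro i hi j j' hjq hj'q
    have ha : a i = a₀ := by
      simp only [a, a₀]
      congr 1
      exact Fin.ext (by simp [Nat.div_eq_of_lt hi])
    have hc : c i = 0 := by simp [c, ha]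
    simp only [A, dif_pos hjq, dif_pos hj'q, hc, zero_mul, zero_add]

/-- For every prime power `q` there exists an orthogonal array OA(q, q+1) whose
first `q` rows are constant across its first `q` columns. -/
theorem oa_exists_of_primePow (q : ℕ) (hq : IsPrimePow q) :
    ∃ A : Fin (q ^ 2) → Fin (q + 1) → Fin q,
      IsOA q (q + 1) A ∧
      ∀ i : Fin (q ^ 2), (i : ℕ) < q →
        ∀ j j' : Fin (q + 1), (j : ℕ) < q → (j' : ℕ) < q → A i j = A i j' := by
  obtain ⟨p, n, hp, hn, rfl⟩ := hq
  haveI : Fact p.Prime := ⟨hp.nat_prime⟩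
  haveI : Fintype (GaloisField p n) := Fintype.ofFinite _
  exact oa_aux (GaloisField p n) (p ^ n)
    (by rw [← Nat.card_eq_fintype_card]; exact GaloisField.card p n hn.ne')
end

section
/- Let k ≥ 1, m ≥ 1, len = k + m, and b = len mod m. If 0 < b < m − 1, then at least two groups of the D³ grouping have size at most m − 1; formally, the number of indices j < N_g whose group size (equal to Size_max if j < t and Size_min otherwise) is at most m − 1 is at least 2. -/
/-- Ceiling division of naturals: `⌈a / b⌉ = (a + b - 1) / b`. -/
def cdiv (a b : ℕ) : ℕ := (a + b - 1) / b

/-- `N_g = ⌈len / m⌉`, the number of groups of the D³ grouping. -/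
def Ng (len m : ℕ) : ℕ := cdiv len m

/-- `Size_max = ⌈len / N_g⌉`. -/
def sizeMax (len m : ℕ) : ℕ := cdiv len (Ng len m)

/-- `Size_min = ⌊len / N_g⌋`. -/
def sizeMin (len m : ℕ) : ℕ := len / Ng len m

/-- `t = len mod N_g`, the number of groups of size `Size_max`. -/
def tG (len m : ℕ) : ℕ := len % Ng len m

/-- The size of the `j`-th group of the D³ grouping: the first `t` groups have
`Size_max` blocks, the remaining `N_g - t` groups have `Size_min` blocks. -/
def groupSize (len m j : ℕ) : ℕ :=
  if j < tG len m then sizeMax len m else sizeMin len m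

/-- The index of the group of the D³ grouping containing block `x`
(the groups are consecutive runs of block indices). -/
def groupOf (len m x : ℕ) : ℕ :=
  if x < tG len m * sizeMax len m then x / sizeMax len m
  else tG len m + (x - tG len m * sizeMax len m) / sizeMin len m

/-- The position of block `x` within its group under the D³ grouping. -/
def offsetOf (len m x : ℕ) : ℕ :=
  if x < tG len m * sizeMax len m then x % sizeMax len m
  else (x - tG len m * sizeMax len m) % sizeMin len m

lemma cdiv_of_mod_pos (a b : ℕ) (hb : 0 < b) (h : 0 < a % b) :
    cdiv a b = a / b + 1 := by
  have hd := Nat.div_add_mod a b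
  have hr : a % b < b := Nat.mod_lt _ hb
  unfold cdiv
  apply Nat.div_eq_of_lt_le
  · have : (a / b + 1) * b = b * (a / b) + b := by ring
    omega
  · have : (a / b + 1 + 1) * b = b * (a / b) + 2 * b := by ring
    omega


/-- Lemma 2: for `len = k + m` and `b = len mod m`, if `0 < b < m - 1` then at
least two groups of the D³ grouping have size at most `m - 1`. -/
theorem d3_two_small_groups (k m : ℕ) (hk : 1 ≤ k) (hm : 1 ≤ m)
    (hb1 : 0 < (k + m) % m) (hb2 : (k + m) % m < m - 1) :
    2 ≤ ((Finset.range (Ng (k + m) m)).filter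
      (fun j => groupSize (k + m) m j ≤ m - 1)).card := by
  set len := k + m with hlendef
  have hm' : 0 < m := hm
  have hlen : m ≤ len := by omega
  have hq : 1 ≤ len / m := (Nat.one_le_div_iff hm').mpr hlen
  have hNg : Ng len m = len / m + 1 := cdiv_of_mod_pos len m hm' hb1
  have hNgpos : 0 < Ng len m := by omega
  have hNg2 : 2 ≤ Ng len m := by omega
  -- len < m * Ng
  have hdm := Nat.div_add_mod len m
  have hlt : len < m * Ng len m := by
    rw [hNg]
    have : m * (len / m + 1) = m * (len / m) + m := by ring
    omega
  have hmin : sizeMin len m ≤ m - 1 := by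
    have : len / Ng len m < m := by
      rw [Nat.div_lt_iff_lt_mul hNgpos]
      nlinarith [hlt]
    unfold sizeMin; omega
  have ht : tG len m < Ng len m := Nat.mod_lt _ hNgpos
  by_cases hcase : tG len m + 2 ≤ Ng len m
  · -- two sizeMin groups: indices t and t+1
    have hsub : ({tG len m, tG len m + 1} : Finset ℕ) ⊆
        (Finset.range (Ng len m)).filter (fun j => groupSize len m j ≤ m - 1) := by
      intro j hj
      simp only [Finset.mem_insert, Finset.mem_singleton] at hj
      simp only [Finset.mem_filter, Finset.mem_range]
      constructor
      · omega
      · unfold groupSize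
        rw [if_neg (by omega)]
        exact hmin
    have hcard := Finset.card_le_card hsub
    rwa [Finset.card_pair (by omega)] at hcard
  · -- t = Ng - 1, show sizeMax ≤ m - 1 too, so all groups qualify
    have htE : tG len m = Ng len m - 1 := by omega
    have htpos : 0 < tG len m := by omega
    have hmax : sizeMax len m = sizeMin len m + 1 := by
      unfold sizeMax sizeMin
      exact cdiv_of_mod_pos len (Ng len m) hNgpos htpos
    have hsmax : sizeMax len m ≤ m - 1 := by
      rw [hmax]
      by_contra hcon
      have hsm : sizeMin len m = m - 1 := by omega
      have hd2 := Nat.div_add_mod len (Ng len m)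
      -- len = Ng * sizeMin + t
      have e1 : Ng len m * sizeMin len m + tG len m = len := hd2
      rw [hsm, htE, hNg] at e1
      -- e1 : (q+1) * (m-1) + (q+1-1) = len, with len = m*q + b
      have hexp : (len / m + 1) * (m - 1) + (len / m + 1) = (len / m + 1) * m := by
        rw [← Nat.mul_succ]
        congr 1
        omega
      have hring : (len / m + 1) * m = m * (len / m) + m := by ring
      omega
    have hall : ∀ j ∈ Finset.range (Ng len m), groupSize len m j ≤ m - 1 := by
      intro j _
      unfold groupSize
      split
      · exact hsmax
      · exact hmin
    rw [Finset.filter_true_of_mem hall, Finset.card_range]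
    omega
end

section
/- Let n ≥ 1, N_g ≥ 2, and let A be an orthogonal array OA(n, N_g). In the D³ node-level placement, the k'-th block of group j of the i-th stripe (for the n² stripes i ∈ Fin (n²) of a stripe region) is stored on node (A i j + k') mod n of rack j. Then for every rack j ∈ Fin N_g, every position offset c ∈ Fin n, and every node y ∈ Fin n, exactly n of the n² stripes place their block of position (j, c) on node y; formally, the cardinality of {i ∈ Fin (n²) : A i j + c = y} (addition in ZMod n) equals n. Hence, within a cluster of n² stripes, each node of a rack stores the same number of data/parity blocks of each position type. -/
/-!
Pairing column `j` with any other column `j'` gives a bijection from the rows onto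
`Fin n × Fin n`, so every symbol occurs exactly `n` times in column `j`. The shift
`a ↦ a + c` is injective on residues mod `n`, so the rows with `A i j + c = y` are exactly
those whose entry in column `j` is the single residue `y - c`.
-/

open Finset

theorem Finset.card_filter_fst_eq_of_bijective {α β γ : Type*} [Fintype α] [Fintype γ]
    [DecidableEq β] {f : α → β × γ} (hf : f.Bijective) (b : β) :
    #{a | (f a).1 = b} = Fintype.card γ := by
  let e := Equiv.ofBijective f hf
  calc #{a | (f a).1 = b} = #({b} ×ˢ (univ : Finset γ)) :=
        card_equiv e fun a => by
          simp only [mem_filter, mem_univ, true_and, mem_product, mem_singleton, and_true, e,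
            Equiv.ofBijective_apply]
    _ = Fintype.card γ := by simp

theorem IsOA.card_filter_eq {n k : ℕ} {A : Fin (n ^ 2) → Fin k → Fin n} (hA : IsOA n k A)
    (hk : 2 ≤ k) (j : Fin k) (t : Fin n) : #{i | A i j = t} = n := by
  obtain ⟨j', hj'⟩ := Fintype.exists_ne_of_one_lt_card (by rwa [Fintype.card_fin]) j
  simpa using card_filter_fst_eq_of_bijective (hA j j' hj'.symm) t

theorem ZMod.natCast_finVal_add_injective {n : ℕ} (c : ZMod n) :
    Function.Injective fun a : Fin n => ((a : ℕ) : ZMod n) + c := by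
  intro a b h
  have : NeZero n := NeZero.of_pos a.pos
  have := congrArg ZMod.val (add_right_cancel h)
  rwa [ZMod.val_natCast_of_lt a.isLt, ZMod.val_natCast_of_lt b.isLt, Fin.val_inj] at this

theorem ZMod.exists_natCast_finVal_add_eq {n : ℕ} [NeZero n] (c y : ZMod n) :
    ∃ t : Fin n, ((t : ℕ) : ZMod n) + c = y :=
  ⟨⟨(y - c).val, ZMod.val_lt _⟩, by simp⟩

theorem d3_node_level_balance_general (n Ng : ℕ) (hNg : 2 ≤ Ng)
    (A : Fin (n ^ 2) → Fin Ng → Fin n) (hA : IsOA n Ng A)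
    (j : Fin Ng) (c : Fin n) (y : Fin n) :
    (Finset.univ.filter (fun i : Fin (n ^ 2) =>
        ((A i j : ℕ) : ZMod n) + ((c : ℕ) : ZMod n) = ((y : ℕ) : ZMod n))).card
      = n := by
  have : NeZero n := NeZero.of_pos c.pos
  obtain ⟨t, ht⟩ := ZMod.exists_natCast_finVal_add_eq ((c : ℕ) : ZMod n) ((y : ℕ) : ZMod n)
  simp_rw [(ZMod.natCast_finVal_add_injective _).eq_iff' ht]
  exact hA.card_filter_eq hNg j t

/-- Lemma 3: in the D³ node-level placement defined by an OA(n, N_g), for every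
rack `j`, position offset `c` and node `y`, exactly `n` of the `n²` stripes of a
stripe region place the corresponding block on node `y` of rack `j`
(node indices are computed additively in `ZMod n`). -/
theorem d3_node_level_balance (n Ng : ℕ) (hn : 1 ≤ n) (hNg : 2 ≤ Ng)
    (A : Fin (n ^ 2) → Fin Ng → Fin n) (hA : IsOA n Ng A)
    (j : Fin Ng) (c : Fin n) (y : Fin n) :
    (Finset.univ.filter (fun i : Fin (n ^ 2) =>
        ((A i j : ℕ) : ZMod n) + ((c : ℕ) : ZMod n) = ((y : ℕ) : ZMod n))).card
      = n :=
  d3_node_level_balance_general n Ng hNg A hA j c y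
end

section
/- Let k ≥ 1, m ≥ 1, len = k + m, let n ≥ m, and let A be an orthogonal array OA(n, N_g) where N_g = ⌈len/m⌉. Fix a stripe i ∈ Fin (n²). Define the placement map sending the block that is the k'-th element of group j under the D³ grouping to the pair (j, (A i j + k') mod n) ∈ Fin N_g × Fin n (rack j, node (A i j + k') mod n). Then this placement map from Fin len is injective, and for every rack j the number of blocks of the stripe placed in rack j is at most m. Consequently, any set of m failed nodes holds at most m blocks of the stripe, and any single failed rack holds at most m blocks of the stripe, so in either failure event at least k blocks of the stripe survive (D³ tolerates either m node failures or one rack failure). -/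
/-!
Block `x` of a stripe is recovered from its rack `groupOf x` and its offset `offsetOf x`,
since `x` is the start of its group plus its offset. Offsets are smaller than
`Size_max ≤ m ≤ n`, so reducing `A i j + offset` modulo `n` loses nothing and the placement
is injective; for the same reason a rack holds at most `Size_max ≤ m` blocks. An injective
placement puts at most `m` blocks on `m` nodes, and the remaining `k` blocks survive.
-/

open Finset

lemma cdiv_le_iff {a b c : ℕ} (hb : 0 < b) : cdiv a b ≤ c ↔ a ≤ b * c :=
  ceilDiv_le_iff_le_mul hb

section Grouping

variable {len m : ℕ}

def groupStart (len m g : ℕ) : ℕ :=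
  if g < tG len m then g * sizeMax len m
  else tG len m * sizeMax len m + (g - tG len m) * sizeMin len m

lemma groupStart_groupOf_add_offsetOf (x : ℕ) :
    groupStart len m (groupOf len m x) + offsetOf len m x = x := by
  unfold groupStart groupOf offsetOf
  split_ifs with hx hg hg
  · exact Nat.div_add_mod' x _
  · exact absurd (Nat.div_lt_of_lt_mul (by rwa [Nat.mul_comm])) hg
  · exact absurd hg (Nat.not_lt.2 (Nat.le_add_right _ _))
  · rw [Nat.add_sub_cancel_left, Nat.add_assoc, Nat.div_add_mod']
    omega

lemma groupOf_offsetOf_injective :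
    Function.Injective fun x => (groupOf len m x, offsetOf len m x) := by
  intro x y hxy
  simp only [Prod.mk.injEq] at hxy
  rw [← groupStart_groupOf_add_offsetOf (len := len) (m := m) x,
    ← groupStart_groupOf_add_offsetOf (len := len) (m := m) y, hxy.1, hxy.2]

variable (hl : 0 < len) (hm : 0 < m)
include hl hm

lemma Ng_pos : 0 < Ng len m := by
  by_contra! h
  rw [Ng, cdiv_le_iff hm] at h
  omega

omit hl in
lemma Ng_le : Ng len m ≤ len := by
  rw [Ng, cdiv_le_iff hm]
  exact Nat.le_mul_of_pos_left len hm

lemma sizeMin_pos : 0 < sizeMin len m :=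
  Nat.div_pos (Ng_le hm) (Ng_pos hl hm)

lemma sizeMin_le_sizeMax : sizeMin len m ≤ sizeMax len m := by
  have := Ng_pos hl hm
  exact Nat.div_le_div_right (by omega)

lemma sizeMax_le : sizeMax len m ≤ m := by
  rw [sizeMax, cdiv_le_iff (Ng_pos hl hm), Nat.mul_comm]
  exact le_smul_ceilDiv hm

lemma offsetOf_lt_sizeMax (x : ℕ) : offsetOf len m x < sizeMax len m := by
  unfold offsetOf
  split_ifs
  · exact Nat.mod_lt _ (Nat.lt_of_lt_of_le (sizeMin_pos hl hm) (sizeMin_le_sizeMax hl hm))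
  · exact Nat.lt_of_lt_of_le (Nat.mod_lt _ (sizeMin_pos hl hm)) (sizeMin_le_sizeMax hl hm)

lemma card_filter_groupOf_eq_le (g : ℕ) :
    #{x : Fin len | groupOf len m x = g} ≤ m := by
  calc #{x : Fin len | groupOf len m x = g}
      ≤ #(range (sizeMax len m)) := by
        refine card_le_card_of_injOn (fun x => offsetOf len m x)
          (fun x _ => mem_range.2 (offsetOf_lt_sizeMax hl hm x)) ?_
        intro x hx y hy hxy
        rw [mem_coe, mem_filter] at hx hy
        exact Fin.ext (groupOf_offsetOf_injective (Prod.ext (hx.2.trans hy.2.symm) hxy))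
    _ ≤ m := by rw [card_range]; exact sizeMax_le hl hm

end Grouping

section Placement

def IsD3Placement {N n : ℕ} (len m : ℕ) (a : Fin N → Fin n) (P : Fin len → Fin N × Fin n) :
    Prop :=
  ∀ x : Fin len, ((P x).1 : ℕ) = groupOf len m x ∧
    ((P x).2 : ℕ) = ((a (P x).1 : ℕ) + offsetOf len m x) % n

variable {len m n N : ℕ} {a : Fin N → Fin n} {P : Fin len → Fin N × Fin n}

lemma IsD3Placement.injective (hP : IsD3Placement len m a P) (hl : 0 < len) (hm : 0 < m)
    (hmn : m ≤ n) : Function.Injective P := by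
  have hoff (x : ℕ) : offsetOf len m x < n :=
    (offsetOf_lt_sizeMax hl hm x).trans_le ((sizeMax_le hl hm).trans hmn)
  intro x y hxy
  have hrack : groupOf len m x = groupOf len m y := by
    rw [← (hP x).1, ← (hP y).1, hxy]
  have hnode : (a (P x).1 + offsetOf len m x) % n = (a (P x).1 + offsetOf len m y) % n := by
    rw [← (hP x).2, hxy, (hP y).2]
  have hoffset : offsetOf len m x = offsetOf len m y :=
    (Nat.ModEq.add_left_cancel' _ hnode).eq_of_lt_of_lt (hoff x) (hoff y)
  exact Fin.ext (groupOf_offsetOf_injective (Prod.ext hrack hoffset))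

lemma card_filter_fst_eq_le (hl : 0 < len) (hm : 0 < m)
    (hP : ∀ x : Fin len, ((P x).1 : ℕ) = groupOf len m x) (j : Fin N) :
    #{x | (P x).1 = j} ≤ m := by
  calc #{x | (P x).1 = j} = #{x : Fin len | groupOf len m x = j} := by
        simp only [Fin.ext_iff, hP]
    _ ≤ m := card_filter_groupOf_eq_le hl hm j

end Placement

lemma le_card_filter_not {k m : ℕ} {p : Fin (k + m) → Prop} [DecidablePred p]
    (h : #{x | p x} ≤ m) : k ≤ #{x | ¬p x} := by
  have := card_filter_add_card_filter_not (s := univ) fun x => p x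
  rw [card_univ, Fintype.card_fin] at this
  omega

theorem d3_tolerates_m_nodes_or_one_rack_general (k m n : ℕ)
    (hm : 1 ≤ m) (hmn : m ≤ n)
    (A : Fin (n ^ 2) → Fin (Ng (k + m) m) → Fin n)
    (i : Fin (n ^ 2))
    (P : Fin (k + m) → Fin (Ng (k + m) m) × Fin n)
    (hP : ∀ x : Fin (k + m),
      ((P x).1 : ℕ) = groupOf (k + m) m (x : ℕ) ∧
      ((P x).2 : ℕ) = ((A i (P x).1 : ℕ) + offsetOf (k + m) m (x : ℕ)) % n) :
    Function.Injective P ∧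
    (∀ j : Fin (Ng (k + m) m),
      (Finset.univ.filter (fun x : Fin (k + m) => (P x).1 = j)).card ≤ m) ∧
    (∀ F : Finset (Fin (Ng (k + m) m) × Fin n), F.card = m →
      (Finset.univ.filter (fun x : Fin (k + m) => P x ∈ F)).card ≤ m) ∧
    (∀ F : Finset (Fin (Ng (k + m) m) × Fin n), F.card = m →
      k ≤ (Finset.univ.filter (fun x : Fin (k + m) => P x ∉ F)).card) ∧
    (∀ j : Fin (Ng (k + m) m),
      k ≤ (Finset.univ.filter (fun x : Fin (k + m) => (P x).1 ≠ j)).card) := by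
  have hl : 0 < k + m := by omega
  have hinj : Function.Injective P := IsD3Placement.injective (a := A i) hP hl hm hmn
  have hrack (j) := card_filter_fst_eq_le hl hm (fun x => (hP x).1) j
  have hnodes (F : Finset (Fin (Ng (k + m) m) × Fin n)) (hF : F.card = m) :
      #{x | P x ∈ F} ≤ m :=
    (card_le_card_of_injOn P (fun x hx => (mem_filter.1 hx).2) hinj.injOn).trans hF.le
  exact ⟨hinj, hrack, hnodes, fun F hF => le_card_filter_not (hnodes F hF),
    fun j => le_card_filter_not (hrack j)⟩

/-- Theorem 3: the D³ placement map of a stripe (block `x`, the `k'`-th element of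
group `j`, is placed on node `(A i j + k') mod n` of rack `j`) is injective, every
rack holds at most `m` blocks of the stripe, any `m` failed nodes hold at most `m`
blocks of the stripe, and in either failure event (any `m` node failures or any
single rack failure) at least `k` blocks of the stripe survive. -/
theorem d3_tolerates_m_nodes_or_one_rack (k m n : ℕ)
    (hk : 1 ≤ k) (hm : 1 ≤ m) (hmn : m ≤ n)
    (A : Fin (n ^ 2) → Fin (Ng (k + m) m) → Fin n)
    (hA : IsOA n (Ng (k + m) m) A)
    (i : Fin (n ^ 2))
    (P : Fin (k + m) → Fin (Ng (k + m) m) × Fin n)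
    (hP : ∀ x : Fin (k + m),
      ((P x).1 : ℕ) = groupOf (k + m) m (x : ℕ) ∧
      ((P x).2 : ℕ) = ((A i (P x).1 : ℕ) + offsetOf (k + m) m (x : ℕ)) % n) :
    Function.Injective P ∧
    (∀ j : Fin (Ng (k + m) m),
      (Finset.univ.filter (fun x : Fin (k + m) => (P x).1 = j)).card ≤ m) ∧
    (∀ F : Finset (Fin (Ng (k + m) m) × Fin n), F.card = m →
      (Finset.univ.filter (fun x : Fin (k + m) => P x ∈ F)).card ≤ m) ∧
    (∀ F : Finset (Fin (Ng (k + m) m) × Fin n), F.card = m →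
      k ≤ (Finset.univ.filter (fun x : Fin (k + m) => P x ∉ F)).card) ∧
    (∀ j : Fin (Ng (k + m) m),
      k ≤ (Finset.univ.filter (fun x : Fin (k + m) => (P x).1 ≠ j)).card) :=
  d3_tolerates_m_nodes_or_one_rack_general k m n hm hmn A i P hP
end

section
/- Let r ≥ 2, k ≥ 2, and let A' be an orthogonal array OA(r, k) whose first r rows are each constant across columns, i.e., A' i j = A' i j' for every row i with i < r and all columns j, j'. Then for each column j, the map i ↦ A' i j restricted to the first r rows is a bijection onto Fin r; in particular, each symbol of Fin r occurs exactly once among the first r rows of each column. -/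
/-- If the first `r` rows of an OA(r, k) (with `r, k ≥ 2`) are each constant across
columns, then each column restricted to the first `r` rows is a bijection onto
`Fin r`: each symbol occurs exactly once among the first `r` rows of each column. -/
theorem oa_first_rows_bijective (r k : ℕ) (hr : 2 ≤ r) (hk : 2 ≤ k)
    (A' : Fin (r ^ 2) → Fin k → Fin r) (hA' : IsOA r k A')
    (hconst : ∀ i : Fin (r ^ 2), (i : ℕ) < r → ∀ j j' : Fin k, A' i j = A' i j')
    (j : Fin k) :
    Set.BijOn (fun i => A' i j) {i : Fin (r ^ 2) | (i : ℕ) < r} Set.univ := by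
  set S : Set (Fin (r ^ 2)) := {i : Fin (r ^ 2) | (i : ℕ) < r} with hS
  -- pick a second column
  obtain ⟨j', hjj'⟩ := Fintype.exists_ne_of_one_lt_card
    (by simpa [Fintype.card_fin] using lt_of_lt_of_le one_lt_two hk) j
  have hinj : Set.InjOn (fun i => A' i j) S := by
    intro a ha b hb hab
    have h1 : A' a j' = A' a j := hconst a ha j' j
    have h2 : A' b j' = A' b j := hconst b hb j' j
    have := (hA' j j' hjj'.symm).1 (a₁ := a) (a₂ := b) (by
      simp only [Prod.mk.injEq]
      exact ⟨hab, by rw [h1, h2]; exact hab⟩)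
    exact this
  -- cardinality of S is r
  have hrr : r ≤ r ^ 2 := by nlinarith
  have hScard : S.ncard = r := by
    have he : S = (fun i : Fin r => (Fin.castLE hrr i)) '' Set.univ := by
      ext x
      simp only [Set.mem_image, Set.mem_univ, true_and, hS, Set.mem_setOf_eq]
      constructor
      · intro hx
        exact ⟨⟨(x : ℕ), hx⟩, by ext; simp [Fin.castLE]⟩
      · rintro ⟨y, rfl⟩
        exact y.isLt
    rw [he, Set.ncard_image_of_injective _ (Fin.castLE_injective hrr)]
    simp [Set.ncard_univ]
  have himg : (fun i => A' i j) '' S = Set.univ := by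
    apply Set.eq_of_subset_of_ncard_le (Set.subset_univ _) ?_ (Set.toFinite _)
    rw [Set.ncard_image_of_injOn hinj, hScard, Set.ncard_univ]
    simp
  exact ⟨fun x _ => Set.mem_univ _, hinj, himg.symm.subset⟩
end

section
/- Let r ≥ 2, k ≥ 2, let A' be an orthogonal array OA(r, k) whose first r rows are each constant across columns (A' i j = A' i j' for all i < r and all columns j, j'), and let M be the placement matrix consisting of the last r(r−1) rows of A'. Then every symbol x ∈ Fin r appears exactly r − 1 times in each column of M; formally, for every column j, the cardinality of {i ∈ Fin (r²) : r ≤ i ∧ A' i j = x} equals r − 1. -/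
/-- In the placement matrix `M` consisting of the last `r(r-1)` rows of an OA(r, k)
whose first `r` rows are constant across columns, every symbol appears exactly
`r - 1` times in each column. -/
theorem placement_matrix_column_balanced (r k : ℕ) (hr : 2 ≤ r) (hk : 2 ≤ k)
    (A' : Fin (r ^ 2) → Fin k → Fin r) (hA' : IsOA r k A')
    (hconst : ∀ i : Fin (r ^ 2), (i : ℕ) < r → ∀ j j' : Fin k, A' i j = A' i j')
    (j : Fin k) (x : Fin r) :
    (Finset.univ.filter (fun i : Fin (r ^ 2) =>
        r ≤ (i : ℕ) ∧ A' i j = x)).card = r - 1 := by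
  haveI : Nontrivial (Fin k) := Fin.nontrivial_iff_two_le.mpr hk
  obtain ⟨j₂, hj₂⟩ := exists_ne j
  have hF := hA' j j₂ hj₂.symm
  -- total count of x in column j is r
  have h1 : (Finset.univ.filter (fun i : Fin (r ^ 2) => A' i j = x)).card = r := by
    have e : {i : Fin (r ^ 2) // A' i j = x} ≃
        {p : Fin r × Fin r // p.1 = x} :=
      (Equiv.ofBijective _ hF).subtypeEquiv (fun i => by simp [Equiv.ofBijective])
    have hc := Fintype.card_congr e
    rw [Fintype.card_subtype, Fintype.card_subtype] at hc
    rw [hc]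
    have : (Finset.univ.filter (fun p : Fin r × Fin r => p.1 = x))
        = {x} ×ˢ Finset.univ := by
      ext p
      simp only [Finset.mem_filter, Finset.mem_univ, true_and, Finset.mem_product,
        Finset.mem_singleton, and_true]
    rw [this, Finset.card_product]
    simp
  -- among the first r rows, x appears exactly once in column j
  have hle : r ≤ r ^ 2 := Nat.le_self_pow two_ne_zero r
  set emb : Fin r → Fin (r ^ 2) := fun t => ⟨(t : ℕ), lt_of_lt_of_le t.2 hle⟩ with hemb
  have hginj : Function.Injective (fun t : Fin r => A' (emb t) j) := by
    intro t t' h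
    have h2 : A' (emb t) j₂ = A' (emb t') j₂ := by
      rw [← hconst (emb t) t.2 j j₂, ← hconst (emb t') t'.2 j j₂]
      exact h
    have := hF.injective (a₁ := emb t) (a₂ := emb t') (by simp [h, h2, Prod.ext_iff])
    simpa [hemb, Fin.ext_iff] using this
  have hgsurj : Function.Surjective (fun t : Fin r => A' (emb t) j) :=
    Finite.surjective_of_injective hginj
  obtain ⟨t₀, ht₀⟩ := hgsurj x
  have h2 : (Finset.univ.filter
      (fun i : Fin (r ^ 2) => A' i j = x ∧ (i : ℕ) < r)).card = 1 := by
    rw [Finset.card_eq_one]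
    refine ⟨emb t₀, ?_⟩
    ext i
    simp only [Finset.mem_filter, Finset.mem_univ, true_and, Finset.mem_singleton]
    constructor
    · rintro ⟨hx, hir⟩
      have : emb ⟨(i : ℕ), hir⟩ = i := by simp [hemb, Fin.ext_iff]
      have ht : A' (emb ⟨(i : ℕ), hir⟩) j = A' (emb t₀) j := by
        rw [this, hx]; exact ht₀.symm
      have h3 : (⟨(i : ℕ), hir⟩ : Fin r) = t₀ := hginj ht
      rw [← this, h3]
    · rintro rfl
      exact ⟨ht₀, by simp [hemb]⟩
  -- split the total count
  have hsplit := Finset.card_filter_add_card_filter_not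
    (s := Finset.univ.filter (fun i : Fin (r ^ 2) => A' i j = x))
    (p := fun i : Fin (r ^ 2) => (i : ℕ) < r)
  rw [Finset.filter_filter, Finset.filter_filter, h1] at hsplit
  have hx1 : (Finset.univ.filter
      (fun i : Fin (r ^ 2) => A' i j = x ∧ (i : ℕ) < r)).card = 1 := h2
  have heq : (Finset.univ.filter (fun i : Fin (r ^ 2) =>
      r ≤ (i : ℕ) ∧ A' i j = x))
      = Finset.univ.filter (fun i : Fin (r ^ 2) => A' i j = x ∧ ¬ (i : ℕ) < r) := by
    ext i
    simp [and_comm, Nat.not_lt]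
  rw [heq]
  omega
end

section
/- Let r ≥ 2, k ≥ 2, let A' be an orthogonal array OA(r, k) whose first r rows are each constant across columns, and let M be the placement matrix consisting of the last r(r−1) rows of A'. Then: (i) in every row of M, the entries of any two distinct columns are distinct (no row of M repeats a symbol in two columns); and (ii) for any two distinct columns j ≠ j' and any ordered pair (x, y) of distinct symbols x ≠ y in Fin r, exactly one row of M has entry x in column j and entry y in column j'. -/
lemma diag_covered (r k : ℕ) (hr : 2 ≤ r)
    (A' : Fin (r ^ 2) → Fin k → Fin r) (hA' : IsOA r k A')
    (hconst : ∀ i : Fin (r ^ 2), (i : ℕ) < r → ∀ j j' : Fin k, A' i j = A' i j')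
    (j j' : Fin k) (hjj : j ≠ j') (z : Fin r) :
    ∃ i : Fin (r ^ 2), (i : ℕ) < r ∧ A' i j = z ∧ A' i j' = z := by
  have hrr : r ≤ r ^ 2 := by nlinarith
  set g : Fin r → Fin (r ^ 2) := fun i => ⟨i, lt_of_lt_of_le i.2 hrr⟩ with hg
  have hginj : Function.Injective g := by
    intro a b hab
    exact Fin.ext (by simpa [g] using congrArg Fin.val hab)
  have hbij := hA' j j' hjj
  have hinj : Function.Injective (fun i : Fin r => A' (g i) j) := by
    intro a b hab
    apply hginj
    apply hbij.1
    simp only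
    have ha := hconst (g a) (a.2.trans_le le_rfl) j j'
    have hb := hconst (g b) (b.2.trans_le le_rfl) j j'
    rw [Prod.ext_iff]
    exact ⟨hab, by rw [← ha, ← hb]; exact hab⟩
  have hsurj := Finite.injective_iff_surjective.mp hinj
  obtain ⟨i, hi⟩ := hsurj z
  exact ⟨g i, i.2, hi, by rw [← hconst (g i) i.2 j j']; exact hi⟩

/-- For the placement matrix `M` consisting of the last `r(r-1)` rows of an OA(r, k)
whose first `r` rows are constant across columns:
(i) no row of `M` repeats a symbol in two distinct columns, and
(ii) for any two distinct columns `j ≠ j'` and any ordered pair of distinct symbols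
`x ≠ y`, exactly one row of `M` carries `x` in column `j` and `y` in column `j'`. -/
theorem placement_matrix_rows (r k : ℕ) (hr : 2 ≤ r) (hk : 2 ≤ k)
    (A' : Fin (r ^ 2) → Fin k → Fin r) (hA' : IsOA r k A')
    (hconst : ∀ i : Fin (r ^ 2), (i : ℕ) < r → ∀ j j' : Fin k, A' i j = A' i j') :
    (∀ i : Fin (r ^ 2), r ≤ (i : ℕ) →
      ∀ j j' : Fin k, j ≠ j' → A' i j ≠ A' i j') ∧
    (∀ j j' : Fin k, j ≠ j' → ∀ x y : Fin r, x ≠ y →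
      ∃! i : Fin (r ^ 2), r ≤ (i : ℕ) ∧ A' i j = x ∧ A' i j' = y) := by
  constructor
  · intro i hi j j' hjj heq
    obtain ⟨i₀, hi₀, h0j, h0j'⟩ :=
      diag_covered r k hr A' hA' hconst j j' hjj (A' i j)
    have := (hA' j j' hjj).1 (a₁ := i) (a₂ := i₀)
      (by simp only [Prod.ext_iff]; exact ⟨h0j.symm, by rw [← heq]; exact h0j'.symm⟩)
    rw [this] at hi
    omega
  · intro j j' hjj x y hxy
    obtain ⟨i, hi⟩ := (hA' j j' hjj).2 (x, y)
    simp only [Prod.ext_iff] at hi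
    refine ⟨i, ⟨?_, hi.1, hi.2⟩, ?_⟩
    · by_contra h
      push_neg at h
      have := hconst i h j j'
      rw [hi.1, hi.2] at this
      exact hxy this
    · rintro i' ⟨-, h1, h2⟩
      exact (hA' j j' hjj).1 (by simp only [Prod.ext_iff]; exact ⟨h1.trans hi.1.symm, h2.trans hi.2.symm⟩)
end

section
/- Let n ≥ 1, N_g ≥ 2, let A be an orthogonal array OA(n, N_g), let r ≥ 2, and let M be the placement matrix consisting of the last r(r−1) rows of an orthogonal array OA(r, N_g + 1) whose first r rows are each constant across columns. Place group j of stripe region u into rack M u j, and within each region place the k'-th block of group j of stripe i on node (A i j + k') mod n of that rack. Then for every group index j < N_g, every position offset c ∈ Fin n, every rack R ∈ Fin r, and every node y ∈ Fin n, the number of pairs (u, i) ∈ Fin (r(r−1)) × Fin (n²) with M u j = R and A i j + c = y equals n(r−1). Hence, within r(r−1) stripe regions, D³ places the same number of data/parity blocks of each position type on each node of each rack. -/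
lemma oa_fiber_card {n k : ℕ} (A : Fin (n ^ 2) → Fin k → Fin n)
    (j₁ j₂ : Fin k) (h : Function.Bijective (fun i => (A i j₁, A i j₂)))
    (v : Fin n) :
    (Finset.univ.filter (fun i => A i j₁ = v)).card = n := by
  have h1 : (Finset.univ.filter (fun i => A i j₁ = v)).card
      = (Finset.univ.filter (fun p : Fin n × Fin n => p.1 = v)).card := by
    apply Finset.card_bij (fun i _ => (A i j₁, A i j₂))
    · intro i hi; simp only [Finset.mem_filter, Finset.mem_univ, true_and] at hi ⊢; exact hi
    · intro a _ b _ hab; exact h.1 hab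
    · intro p hp
      simp only [Finset.mem_filter, Finset.mem_univ, true_and] at hp
      obtain ⟨i, hi⟩ := h.2 p
      refine ⟨i, ?_, hi⟩
      simp only [Finset.mem_filter, Finset.mem_univ, true_and]
      have : A i j₁ = p.1 := congrArg Prod.fst hi
      rw [this, hp]
  rw [h1]
  have h2 : (Finset.univ.filter (fun p : Fin n × Fin n => p.1 = v))
      = {v} ×ˢ Finset.univ := by
    ext p
    simp [Finset.mem_product, Prod.ext_iff, eq_comm]
  rw [h2, Finset.card_product]
  simp

/-- Theorem 2: placing group `j` of stripe region `u` into rack `M u j` (where `M`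
consists of the last `r(r-1)` rows of an OA(r, N_g + 1) whose first `r` rows are
constant across columns) and, within each region, the `k'`-th block of group `j`
of stripe `i` on node `(A i j + k') mod n`, every node of every rack receives
exactly `n(r-1)` blocks of each position type `(j, c)`; i.e. D³ places the same
number of data/parity blocks on each node of all racks. -/
theorem d3_rack_level_balance (n Ng r : ℕ) (hn : 1 ≤ n) (hNg : 2 ≤ Ng) (hr : 2 ≤ r)
    (A : Fin (n ^ 2) → Fin Ng → Fin n) (hA : IsOA n Ng A)
    (A' : Fin (r ^ 2) → Fin (Ng + 1) → Fin r) (hA' : IsOA r (Ng + 1) A')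
    (hconst : ∀ i : Fin (r ^ 2), (i : ℕ) < r →
      ∀ j j' : Fin (Ng + 1), A' i j = A' i j')
    (j : Fin Ng) (c : Fin n) (R : Fin r) (y : Fin n) :
    (Finset.univ.filter (fun p : Fin (r ^ 2) × Fin (n ^ 2) =>
        r ≤ (p.1 : ℕ) ∧ A' p.1 j.castSucc = R ∧
        ((A p.2 j : ℕ) : ZMod n) + ((c : ℕ) : ZMod n) = ((y : ℕ) : ZMod n))).card
      = n * (r - 1) := by
  classical
  haveI : NeZero n := ⟨by omega⟩
  -- the node value determined by y and c
  set v₀ : Fin n := ⟨((((y : ℕ) : ZMod n) - ((c : ℕ) : ZMod n)).val), ZMod.val_lt _⟩ with hv₀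
  have hQ : ∀ i : Fin (n ^ 2),
      (((A i j : ℕ) : ZMod n) + ((c : ℕ) : ZMod n) = ((y : ℕ) : ZMod n)) ↔ A i j = v₀ := by
    intro i
    constructor
    · intro h
      have h2 : ((A i j : ℕ) : ZMod n) = ((y : ℕ) : ZMod n) - ((c : ℕ) : ZMod n) :=
        eq_sub_of_add_eq h
      have h3 := congrArg ZMod.val h2
      rw [ZMod.val_natCast_of_lt (A i j).isLt] at h3
      exact Fin.ext h3
    · intro h
      rw [h, hv₀]
      have : (((((y : ℕ) : ZMod n) - ((c : ℕ) : ZMod n)).val : ℕ) : ZMod n)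
          = ((y : ℕ) : ZMod n) - ((c : ℕ) : ZMod n) := ZMod.natCast_val _ |>.trans (ZMod.cast_id _ _)
      simp only [this]
      ring
  -- column indices in the rack-level array
  have hcol : (j.castSucc : Fin (Ng + 1)) ≠ Fin.last Ng := by
    simp [Fin.ext_iff]
    omega
  -- the set of rows of A' whose column-j value is R has cardinality r
  have hS : (Finset.univ.filter (fun u : Fin (r ^ 2) => A' u j.castSucc = R)).card = r :=
    oa_fiber_card A' j.castSucc (Fin.last Ng) (hA' _ _ hcol) R
  -- exactly one of the first r rows has column-j value R
  have hrsq : ∀ m : ℕ, m < r → m < r ^ 2 := by intro m hm; nlinarith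
  set f : Fin r → Fin (r ^ 2) := fun i => ⟨i, hrsq i i.isLt⟩ with hf
  set g : Fin r → Fin r := fun i => A' (f i) j.castSucc with hg
  have hginj : Function.Injective g := by
    intro a b hab
    have h1 : A' (f a) (Fin.last Ng) = A' (f a) j.castSucc := hconst (f a) a.isLt _ _
    have h2 : A' (f b) (Fin.last Ng) = A' (f b) j.castSucc := hconst (f b) b.isLt _ _
    have : (A' (f a) j.castSucc, A' (f a) (Fin.last Ng))
        = (A' (f b) j.castSucc, A' (f b) (Fin.last Ng)) := by
      rw [h1, h2]; exact Prod.ext hab hab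
    have := (hA' _ _ hcol).1 this
    have : (f a : ℕ) = (f b : ℕ) := congrArg Fin.val this
    exact Fin.ext this
  have hgbij : Function.Bijective g := Finite.injective_iff_bijective.mp hginj
  obtain ⟨i₀, hi₀⟩ := hgbij.2 R
  have hT : (Finset.univ.filter (fun u : Fin (r ^ 2) =>
      A' u j.castSucc = R ∧ (u : ℕ) < r)).card = 1 := by
    have : (Finset.univ.filter (fun u : Fin (r ^ 2) =>
        A' u j.castSucc = R ∧ (u : ℕ) < r)) = {f i₀} := by
      ext u
      simp only [Finset.mem_filter, Finset.mem_univ, true_and, Finset.mem_singleton]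
      constructor
      · rintro ⟨h1, h2⟩
        have : u = f ⟨u, h2⟩ := Fin.ext rfl
        rw [this] at h1 ⊢
        have : (⟨(u : ℕ), h2⟩ : Fin r) = i₀ := hginj (h1.trans hi₀.symm)
        rw [this]
      · rintro rfl
        exact ⟨hi₀, i₀.isLt⟩
    rw [this, Finset.card_singleton]
  -- count of rows with index ≥ r and column-j value R
  have hS' : (Finset.univ.filter (fun u : Fin (r ^ 2) =>
      r ≤ (u : ℕ) ∧ A' u j.castSucc = R)).card = r - 1 := by
    have hsplit := Finset.card_filter_add_card_filter_not
      (s := Finset.univ.filter (fun u : Fin (r ^ 2) => A' u j.castSucc = R))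
      (p := fun u => (u : ℕ) < r)
    rw [Finset.filter_filter, Finset.filter_filter] at hsplit
    rw [hS, hT] at hsplit
    have heq : (Finset.univ.filter (fun u : Fin (r ^ 2) =>
        r ≤ (u : ℕ) ∧ A' u j.castSucc = R))
        = (Finset.univ.filter (fun u : Fin (r ^ 2) =>
        A' u j.castSucc = R ∧ ¬ (u : ℕ) < r)) := by
      ext u; simp only [Finset.mem_filter, Finset.mem_univ, true_and, not_lt]
      tauto
    rw [heq]
    omega
  -- count of stripes with the right node value
  have hA2 : (Finset.univ.filter (fun i : Fin (n ^ 2) => A i j = v₀)).card = n := by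
    haveI : Nontrivial (Fin Ng) :=
      ⟨⟨⟨0, by omega⟩, ⟨1, by omega⟩, by simp [Fin.ext_iff]⟩⟩
    obtain ⟨j', hj'⟩ := exists_ne j
    exact oa_fiber_card A j j' (hA j j' hj'.symm) v₀
  -- split the product
  have hprod : (Finset.univ.filter (fun p : Fin (r ^ 2) × Fin (n ^ 2) =>
        r ≤ (p.1 : ℕ) ∧ A' p.1 j.castSucc = R ∧
        ((A p.2 j : ℕ) : ZMod n) + ((c : ℕ) : ZMod n) = ((y : ℕ) : ZMod n)))
      = (Finset.univ.filter (fun u : Fin (r ^ 2) => r ≤ (u : ℕ) ∧ A' u j.castSucc = R))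
        ×ˢ (Finset.univ.filter (fun i : Fin (n ^ 2) => A i j = v₀)) := by
    ext p
    simp only [Finset.mem_filter, Finset.mem_univ, true_and, Finset.mem_product, hQ p.2]
    tauto
  rw [hprod, Finset.card_product, hS', hA2]
  ring
end

section
/- Let r ≥ 2, k ≥ 2, let A' be an orthogonal array OA(r, k) whose first r rows are each constant across columns, and let M be the placement matrix consisting of the last r(r−1) rows of A'. Then for any two distinct columns x ≠ x' of M and any f ∈ Fin r, the set {u : M u x = f} has exactly r − 1 elements, and the map u ↦ M u x' restricted to this set is a bijection onto Fin r \ {f}: the r − 1 values M u x' are pairwise distinct and are precisely the r − 1 symbols different from f. (This is the combinatorial content of Theorem 6: when a node of rack f fails, the region-groups and recovered region-groups involved in recovery are distributed exactly one per surviving rack, so cross-rack read and write loads are balanced among the surviving racks.) -/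
/-- Theorem 6 (combinatorial content): in the placement matrix `M` (the last
`r(r-1)` rows of an OA(r, k) whose first `r` rows are constant across columns),
for any two distinct columns `x ≠ x'` and any symbol `f`, there are exactly
`r - 1` rows with entry `f` in column `x`, and over these rows column `x'` takes
each of the `r - 1` symbols different from `f` exactly once. -/
theorem placement_matrix_recovery_balance (r k : ℕ) (hr : 2 ≤ r) (hk : 2 ≤ k)
    (A' : Fin (r ^ 2) → Fin k → Fin r) (hA' : IsOA r k A')
    (hconst : ∀ i : Fin (r ^ 2), (i : ℕ) < r → ∀ j j' : Fin k, A' i j = A' i j')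
    (x x' : Fin k) (hx : x ≠ x') (f : Fin r) :
    (Finset.univ.filter (fun u : Fin (r ^ 2) =>
        r ≤ (u : ℕ) ∧ A' u x = f)).card = r - 1 ∧
    Set.BijOn (fun u => A' u x')
      {u : Fin (r ^ 2) | r ≤ (u : ℕ) ∧ A' u x = f}
      {y : Fin r | y ≠ f} := by
  have hrr : r ≤ r ^ 2 := by nlinarith
  have hb : Function.Bijective (fun i => (A' i x, A' i x')) := hA' x x' hx
  have hlt : ∀ a : Fin r, (a : ℕ) < r ^ 2 := fun a => lt_of_lt_of_le a.isLt hrr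
  set ι : Fin r → Fin (r ^ 2) := fun a => ⟨a, hlt a⟩ with hι
  have hφinj : Function.Injective (fun a : Fin r => A' (ι a) x) := by
    intro a b hab
    simp only at hab
    have h1 : (fun i => (A' i x, A' i x')) (ι a) = (fun i => (A' i x, A' i x')) (ι b) := by
      simp only [Prod.mk.injEq]
      exact ⟨hab, by rw [← hconst (ι a) a.isLt x x', ← hconst (ι b) b.isLt x x', hab]⟩
    have := hb.1 h1
    simpa [hι, Fin.ext_iff] using this
  have hφsurj : Function.Surjective (fun a : Fin r => A' (ι a) x) :=
    Finite.surjective_of_injective hφinj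
  have hoff : ∀ u : Fin (r ^ 2), r ≤ (u : ℕ) → A' u x ≠ A' u x' := by
    intro u hu heq
    obtain ⟨a, ha⟩ := hφsurj (A' u x)
    simp only at ha
    have h1 : (fun i => (A' i x, A' i x')) (ι a) = (fun i => (A' i x, A' i x')) u := by
      simp only [Prod.mk.injEq]
      exact ⟨ha, by rw [← hconst (ι a) a.isLt x x', ha, heq]⟩
    have h2 := hb.1 h1
    have h3 : ((ι a : Fin (r ^ 2)) : ℕ) = (u : ℕ) := by rw [h2]
    simp only [hι] at h3
    have := a.isLt
    omega
  have hbij : Set.BijOn (fun u => A' u x')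
      {u : Fin (r ^ 2) | r ≤ (u : ℕ) ∧ A' u x = f} {y : Fin r | y ≠ f} := by
    refine ⟨?_, ?_, ?_⟩
    · rintro u ⟨hu, hf⟩
      simp only [Set.mem_setOf_eq]
      intro h
      exact hoff u hu (by rw [hf, h])
    · rintro u ⟨hu, hf⟩ v ⟨hv, hf'⟩ h
      apply hb.1
      simp only [Prod.mk.injEq]
      exact ⟨by rw [hf, hf'], h⟩
    · rintro y hy
      obtain ⟨u, hu⟩ := hb.2 (f, y)
      simp only [Prod.mk.injEq] at hu
      refine ⟨u, ⟨?_, hu.1⟩, hu.2⟩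
      by_contra h
      push_neg at h
      have := hconst u h x x'
      rw [hu.1, hu.2] at this
      exact hy this.symm
  refine ⟨?_, hbij⟩
  have hcard : (Finset.univ.erase f).card = r - 1 := by
    rw [Finset.card_erase_of_mem (Finset.mem_univ f), Finset.card_univ, Fintype.card_fin]
  rw [← hcard]
  apply Finset.card_bij (fun u _ => A' u x')
  · intro u hu
    rw [Finset.mem_filter] at hu
    have := hbij.1 hu.2
    simpa using this
  · intro u hu v hv h
    rw [Finset.mem_filter] at hu hv
    exact hbij.2.1 hu.2 hv.2 h
  · intro y hy
    have hy' : y ≠ f := by simpa using hy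
    obtain ⟨u, hu, hu'⟩ := hbij.2.2 hy'
    exact ⟨u, Finset.mem_filter.mpr ⟨Finset.mem_univ u, hu⟩, hu'⟩
end

section
/- Let n ≥ 1, N' ≥ 2, let A be an orthogonal array OA(n, N'), and let s ≥ 1 (the number of blocks in an LRC stripe, s = k + l + g). Let col : Fin s → Fin N' and off : Fin s → Fin n assign to each block of the stripe a column of A and a node offset. Let r ≥ 2 and let M be the placement matrix consisting of the last r(r−1) rows of an orthogonal array OA(r, s + 1) whose first r rows are each constant across columns. Place block b of stripe i of region u on node (A i (col b) + off b) mod n of rack M u b. Then for every block index b ∈ Fin s, every rack R ∈ Fin r, and every node y ∈ Fin n, the number of pairs (u, i) ∈ Fin (r(r−1)) × Fin (n²) with M u b = R and A i (col b) + off b = y equals n(r−1). Hence D³ places the same number of data blocks, local parity blocks, and global parity blocks on each node of all racks for Locally Repairable Codes. -/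
lemma card_col {n k : ℕ} (A : Fin (n ^ 2) → Fin k → Fin n) (hA : IsOA n k A)
    (j₁ j₂ : Fin k) (h : j₁ ≠ j₂) (c : Fin n) :
    (Finset.univ.filter (fun i => A i j₁ = c)).card = n := by
  classical
  let e : Fin (n ^ 2) ≃ Fin n × Fin n := Equiv.ofBijective _ (hA j₁ j₂ h)
  have key : (Finset.univ.filter (fun i => A i j₁ = c)).card
      = (Finset.univ.filter (fun q : Fin n × Fin n => q.1 = c)).card := by
    apply Finset.card_bij (fun i _ => e i)
    · intro i hi
      simp only [Finset.mem_filter, Finset.mem_univ, true_and] at hi ⊢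
      exact hi
    · intro i _ i' _ hii'
      exact e.injective hii'
    · intro q hq
      refine ⟨e.symm q, ?_, (e.apply_symm_apply q)⟩
      simp only [Finset.mem_filter, Finset.mem_univ, true_and] at hq ⊢
      have : e (e.symm q) = q := e.apply_symm_apply q
      have h1 : A (e.symm q) j₁ = q.1 := congrArg Prod.fst this
      rw [h1]; exact hq
  rw [key]
  have : (Finset.univ.filter (fun q : Fin n × Fin n => q.1 = c))
      = {c} ×ˢ Finset.univ := by
    ext ⟨a, bb⟩; simp [eq_comm]
  rw [this, Finset.card_product]; simp

/-- Theorem 4 (LRC data layout): placing block `b` of stripe `i` of region `u` on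
node `(A i (col b) + off b) mod n` of rack `M u b`, where `A` is an OA(n, N') and
`M` consists of the last `r(r-1)` rows of an OA(r, s+1) whose first `r` rows are
constant across columns, every node of every rack receives exactly `n(r-1)` copies
of each block position `b` of an LRC stripe; hence D³ places the same number of
data blocks, local parity blocks and global parity blocks on each node of all
racks for Locally Repairable Codes. -/
theorem d3_lrc_balance (n N' s r : ℕ)
    (hn : 1 ≤ n) (hN' : 2 ≤ N') (hs : 1 ≤ s) (hr : 2 ≤ r)
    (A : Fin (n ^ 2) → Fin N' → Fin n) (hA : IsOA n N' A)
    (col : Fin s → Fin N') (off : Fin s → Fin n)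
    (A' : Fin (r ^ 2) → Fin (s + 1) → Fin r) (hA' : IsOA r (s + 1) A')
    (hconst : ∀ i : Fin (r ^ 2), (i : ℕ) < r →
      ∀ j j' : Fin (s + 1), A' i j = A' i j')
    (b : Fin s) (R : Fin r) (y : Fin n) :
    (Finset.univ.filter (fun p : Fin (r ^ 2) × Fin (n ^ 2) =>
        r ≤ (p.1 : ℕ) ∧ A' p.1 b.castSucc = R ∧
        ((A p.2 (col b) : ℕ) : ZMod n) + ((off b : ℕ) : ZMod n)
          = ((y : ℕ) : ZMod n))).card
      = n * (r - 1) := by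
  classical
  haveI : NeZero n := ⟨by omega⟩
  set P : Fin (r ^ 2) → Prop := fun u => r ≤ (u : ℕ) ∧ A' u b.castSucc = R with hP
  set Q : Fin (n ^ 2) → Prop := fun i =>
    ((A i (col b) : ℕ) : ZMod n) + ((off b : ℕ) : ZMod n) = ((y : ℕ) : ZMod n) with hQ
  have hsplit : (Finset.univ.filter (fun p : Fin (r ^ 2) × Fin (n ^ 2) =>
        r ≤ (p.1 : ℕ) ∧ A' p.1 b.castSucc = R ∧
        ((A p.2 (col b) : ℕ) : ZMod n) + ((off b : ℕ) : ZMod n)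
          = ((y : ℕ) : ZMod n)))
      = Finset.univ.filter (fun p : Fin (r ^ 2) × Fin (n ^ 2) => P p.1 ∧ Q p.2) := by
    apply Finset.filter_congr
    intro p _
    simp only [hP, hQ, and_assoc]
  have hprod : (Finset.univ.filter (fun p : Fin (r ^ 2) × Fin (n ^ 2) => P p.1 ∧ Q p.2)).card
      = (Finset.univ.filter P).card * (Finset.univ.filter Q).card := by
    rw [← Finset.card_product, ← Finset.filter_product, Finset.univ_product_univ]
  rw [hsplit, hprod]
  -- Second factor: card = n
  have hQcard : (Finset.univ.filter Q).card = n := by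
    set z : ZMod n := ((y : ℕ) : ZMod n) - ((off b : ℕ) : ZMod n) with hz
    have hd : z.val < n := z.val_lt
    set d : Fin n := ⟨z.val, hd⟩ with hdd
    have hcastd : ((d : ℕ) : ZMod n) = z := by
      simp [hdd, ZMod.natCast_val, ZMod.cast_id]
    have hiff : ∀ i, Q i ↔ A i (col b) = d := by
      intro i
      constructor
      · intro hQi
        have h1 : ((A i (col b) : ℕ) : ZMod n) = z := by
          rw [hz]; exact eq_sub_of_add_eq hQi
        have h2 : (A i (col b) : ℕ) = z.val := by
          rw [← h1, ZMod.val_cast_of_lt (A i (col b)).isLt]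
        exact Fin.ext h2
      · intro hAi
        have h3 : ((A i (col b) : ℕ) : ZMod n) = z := by rw [hAi]; exact hcastd
        show ((A i (col b) : ℕ) : ZMod n) + ((off b : ℕ) : ZMod n) = ((y : ℕ) : ZMod n)
        rw [h3, hz]; ring
    have hfe : Finset.univ.filter Q = Finset.univ.filter (fun i => A i (col b) = d) :=
      Finset.filter_congr (fun i _ => by simpa using hiff i)
    rw [hfe]
    -- find a second distinct column
    obtain ⟨j₂, hj₂⟩ := Fintype.exists_ne_of_one_lt_card (by simp; omega) (col b)
    exact card_col A hA (col b) j₂ (Ne.symm hj₂) d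
  -- First factor: card = r - 1
  have hPcard : (Finset.univ.filter P).card = r - 1 := by
    have hne : b.castSucc ≠ Fin.last s := Fin.ne_of_lt (Fin.castSucc_lt_last b)
    have htot : (Finset.univ.filter (fun u => A' u b.castSucc = R)).card = r :=
      card_col A' hA' b.castSucc (Fin.last s) hne R
    have hrr : r ≤ r ^ 2 := Nat.le_self_pow two_ne_zero r
    -- exactly one of the first r rows has value R
    have hlow : (Finset.univ.filter
        (fun u : Fin (r ^ 2) => A' u b.castSucc = R ∧ (u : ℕ) < r)).card = 1 := by
      set f : Fin r → Fin r := fun v => A' ⟨v, lt_of_lt_of_le v.isLt hrr⟩ b.castSucc with hf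
      have hfinj : Function.Injective f := by
        intro v v' hvv'
        have hu : ((⟨v, lt_of_lt_of_le v.isLt hrr⟩ : Fin (r ^ 2)) : ℕ) < r := v.isLt
        have hu' : ((⟨v', lt_of_lt_of_le v'.isLt hrr⟩ : Fin (r ^ 2)) : ℕ) < r := v'.isLt
        have hc := hconst _ hu b.castSucc (Fin.last s)
        have hc' := hconst _ hu' b.castSucc (Fin.last s)
        have hpair : (fun i => (A' i b.castSucc, A' i (Fin.last s)))
              (⟨v, lt_of_lt_of_le v.isLt hrr⟩ : Fin (r ^ 2))
            = (fun i => (A' i b.castSucc, A' i (Fin.last s)))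
              (⟨v', lt_of_lt_of_le v'.isLt hrr⟩ : Fin (r ^ 2)) := by
          simp only [hf] at hvv'
          simp only [← hc, ← hc', hvv']
        have := (hA' b.castSucc (Fin.last s) hne).1 hpair
        have := congrArg Fin.val this
        exact Fin.ext this
      have hfsurj : Function.Surjective f := Finite.surjective_of_injective hfinj
      obtain ⟨v, hv⟩ := hfsurj R
      rw [Finset.card_eq_one]
      refine ⟨⟨v, lt_of_lt_of_le v.isLt hrr⟩, ?_⟩
      ext u
      simp only [Finset.mem_filter, Finset.mem_univ, true_and, Finset.mem_singleton]
      constructor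
      · rintro ⟨hur, hul⟩
        -- u is a first row with value R; so is ⟨v,_⟩; injectivity forces equality
        have hcu := hconst u hul b.castSucc (Fin.last s)
        have hcv := hconst (⟨v, lt_of_lt_of_le v.isLt hrr⟩ : Fin (r ^ 2)) v.isLt
          b.castSucc (Fin.last s)
        have hpair : (fun i => (A' i b.castSucc, A' i (Fin.last s))) u
            = (fun i => (A' i b.castSucc, A' i (Fin.last s)))
              (⟨v, lt_of_lt_of_le v.isLt hrr⟩ : Fin (r ^ 2)) := by
          have hvR : A' (⟨v, lt_of_lt_of_le v.isLt hrr⟩ : Fin (r ^ 2)) b.castSucc = R := hv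
          simp only [← hcu, ← hcv, hur, hvR]
        exact (hA' b.castSucc (Fin.last s) hne).1 hpair
      · rintro rfl
        exact ⟨hv, v.isLt⟩
    have hpartition := Finset.card_filter_add_card_filter_not
      (s := Finset.univ.filter (fun u : Fin (r ^ 2) => A' u b.castSucc = R))
      (p := fun u => (u : ℕ) < r)
    rw [Finset.filter_filter, Finset.filter_filter, htot, hlow] at hpartition
    have hPeq : Finset.univ.filter P
        = Finset.univ.filter (fun u : Fin (r ^ 2) => A' u b.castSucc = R ∧ ¬ (u : ℕ) < r) := by
      apply Finset.filter_congr
      intro u _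
      simp only [hP, not_lt, and_comm]
    rw [hPeq]
    omega
  rw [hQcard, hPcard, Nat.mul_comm]
end
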